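/- Let G be a finite group acting linearly on ℝ^n and hence on ℝ[X_1, …, X_n], and let ℝ[X]_{≤ d} = ⊕_{i ∈ I} ⊕_{j=1}^{η_i} W_{i,j} be a decomposition of the polynomials of degree at most d into irreducible G-submodules, where for each i the W_{i,j} are pairwise isomorphic to an irreducible representation W_i, the W_i for distinct i are non-isomorphic, and each W_i remains irreducible over ℂ. Let f_{i1}, …, f_{iη_i} ∈ ℝ[X]_{≤ d} be polynomials such that the G-span of f_{i1} equals W_{i,1} and, for each j, f_{ij} is the image of f_{i1} under the (up to scalar unique) G-isomorphism from W_{i,1} to W_{i,j}. Then every G-invariant polynomial p of degree at most 2d which is a sum of squares can be written as p = Σ_{i ∈ I} Σ_{j=1}^{η_i} Σ_{g ∈ G} p_{ij}^g, where each p_{ij} is a sum of squares of elements of the real linear span of f_{i1}, …, f_{iη_i}. -/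

import Mathlib

/-!
Since `p` is invariant, `p = |G|⁻¹ ∑_g p^g`. Write each `s t` of `p = ∑_t (s t)²` as
`∑_{i,j} φ i j (v_tij)` with `v_tij ∈ W i 0`. For `a ∈ W i j` and `b ∈ W i' j'` the orbit sum
`∑_g (a b)^g` is, coefficientwise, a `G`-invariant pairing, and a `G`-invariant inner product `B`
turns such a pairing into a `G`-map `W i j → W i' j'`. By Schur's lemma it therefore vanishes for
`i ≠ i'`, while for `i = i'` absolute irreducibility makes `∑_g (φ i j a · φ i j' b)^g` the
multiple `B a b / B (f i 0) (f i 0)` of `∑_g (f i j · f i j')^g`. Hence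
`p = ∑_i ∑_g (∑_{j,j'} M_i j j' · f i j · f i j')^g` with `M_i` a nonnegative multiple of a sum of
Gram matrices of `B`, and factoring `M_i = Lᵀ L` turns the inner sum into
`∑_k (∑_j L k j · f i j)²`.
-/

open MvPolynomial

noncomputable def polyAct {K : Type*} [CommSemiring K] {n : ℕ}
    (M : Matrix (Fin n) (Fin n) K) :
    MvPolynomial (Fin n) K →ₐ[K] MvPolynomial (Fin n) K :=
  MvPolynomial.aeval (fun i => ∑ j, M i j • MvPolynomial.X j)

theorem map_sq_sum_of_map_mul_eq_zero {ι A M F : Type*} [CommSemiring A] [AddCommMonoid M]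
    [FunLike F A M] [AddMonoidHomClass F A M] (N : F) {s : Finset ι} {x : ι → A}
    (h : ∀ i ∈ s, ∀ j ∈ s, i ≠ j → N (x i * x j) = 0) :
    N ((∑ i ∈ s, x i) ^ 2) = ∑ i ∈ s, N (x i ^ 2) := by
  rw [sq, Finset.sum_mul_sum, map_sum]
  refine Finset.sum_congr rfl fun i hi => ?_
  rw [map_sum, Finset.sum_eq_single_of_mem i hi fun j hj hji => h i hi j hj hji.symm, sq]

theorem Submodule.exists_sum_eq_of_mem_iSup {R M ι : Type*} [Semiring R] [AddCommMonoid M]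
    [Module R M] [Fintype ι] {p : ι → Submodule R M} {x : M} (hx : x ∈ ⨆ i, p i) :
    ∃ u : ι → M, (∀ i, u i ∈ p i) ∧ ∑ i, u i = x := by
  obtain ⟨u, hu, rfl⟩ := (Submodule.mem_iSup_iff_exists_finsupp p x).1 hx
  exact ⟨u, hu, (Finsupp.sum_fintype u (fun _ xi => xi) fun _ => rfl).symm⟩

theorem LinearMap.BilinForm.exists_isSymm_pos {K V : Type*} [Field K] [LinearOrder K]
    [IsStrictOrderedRing K] [AddCommGroup V] [Module K V] :
    ∃ B : LinearMap.BilinForm K V, B.IsSymm ∧ ∀ v, v ≠ 0 → 0 < B v v := by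
  classical
  let b := Module.Basis.ofVectorSpace K V
  refine ⟨b.toDual, LinearMap.BilinForm.isSymm_iff_flip.2 ?_, fun v hv => ?_⟩
  · exact LinearMap.ext_basis b b fun i j => by simp [Module.Basis.toDual_apply, eq_comm]
  · have hsq : b.toDual v v = ∑ i ∈ (b.repr v).support, b.repr v i * b.repr v i := by
      nth_rw 2 [← b.linearCombination_repr v]
      simp [Finsupp.linearCombination_apply, Finsupp.sum, Module.Basis.toDual_apply_left]
    obtain ⟨i, hi⟩ := (b.repr v).support_nonempty_iff.2 (b.repr.map_ne_zero_iff.2 hv)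
    exact hsq ▸ Finset.sum_pos' (fun i _ => mul_self_nonneg _)
      ⟨i, hi, mul_self_pos.2 (Finsupp.mem_support_iff.1 hi)⟩

theorem Matrix.PosSemidef.exists_sum_sq {ι A : Type*} [Fintype ι] [CommRing A] [Algebra ℝ A]
    {M : Matrix ι ι ℝ} (hM : M.PosSemidef) (x : ι → A) :
    ∃ L : Matrix ι ι ℝ, ∑ j, ∑ j', M j j' • (x j * x j') = ∑ k, (∑ j, L k j • x j) ^ 2 := by
  classical
  open scoped MatrixOrder in
  obtain ⟨L, rfl⟩ := CStarAlgebra.nonneg_iff_eq_star_mul_self.mp hM.nonneg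
  refine ⟨L, ?_⟩
  simp only [sq, Finset.sum_mul_sum, smul_mul_smul_comm, Matrix.mul_apply, Matrix.star_apply,
    star_trivial, Finset.sum_smul]
  exact (Finset.sum_congr rfl fun j _ => Finset.sum_comm).trans Finset.sum_comm

namespace LinearMap.BilinForm.IsPosSemidef

variable {V : Type*} [AddCommGroup V] [Module ℝ V] {B : LinearMap.BilinForm ℝ V}

theorem posSemidef_gram {ι : Type*} [Fintype ι] (hB : B.IsPosSemidef) (v : ι → V) :
    (Matrix.of fun i j => B (v i) (v j)).PosSemidef := by
  refine .of_dotProduct_mulVec_nonneg ?_ fun x => ?_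
  · ext i j
    simp [hB.isSymm.eq (v i) (v j)]
  · refine (hB.isNonneg.nonneg (∑ i, x i • v i)).trans_eq ?_
    simp only [map_sum, map_smul, LinearMap.sum_apply, LinearMap.smul_apply, smul_eq_mul,
      dotProduct, Matrix.mulVec, Matrix.of_apply, star_trivial, Finset.mul_sum]
    exact Finset.sum_congr rfl fun i _ => Finset.sum_congr rfl fun j _ => by
      rw [hB.isSymm.eq (v j)]; ring

theorem exists_sum_sq_eq_sum_gram {A T I : Type*} [CommRing A] [Algebra ℝ A] [Fintype T]
    [Fintype I] {κ : I → Type*} [∀ i, Fintype (κ i)] (hB : B.IsPosSemidef) {c : I → ℝ}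
    (hc : ∀ i, 0 ≤ c i) (v : T → (i : I) → κ i → V) (x : (i : I) → κ i → A) :
    ∃ L : (i : I) → Matrix (κ i) (κ i) ℝ,
      ∑ t, ∑ i, ∑ j, ∑ j', (c i * B (v t i j) (v t i j')) • (x i j * x i j') =
        ∑ i, ∑ k, (∑ j, L i k j • x i j) ^ 2 := by
  choose L hL using fun i =>
    ((Matrix.posSemidef_sum _ fun t _ => hB.posSemidef_gram (v t i)).smul (hc i)).exists_sum_sq
      (x i)
  refine ⟨L, ?_⟩
  rw [Finset.sum_comm]
  refine Finset.sum_congr rfl fun i _ => ?_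
  rw [← hL i]
  simp only [Matrix.smul_apply, Matrix.sum_apply, Matrix.of_apply, smul_eq_mul, Finset.mul_sum,
    Finset.sum_smul]
  rw [Finset.sum_comm]
  exact Finset.sum_congr rfl fun j _ => Finset.sum_comm

end LinearMap.BilinForm.IsPosSemidef

namespace MvPolynomial

variable {σ R : Type*} [CommSemiring R]

theorem sum_range_homogeneousComponent_of_totalDegree_le {p : MvPolynomial σ R} {a : ℕ}
    (hp : p.totalDegree ≤ a) : ∑ i ∈ Finset.range (a + 1), homogeneousComponent i p = p := by
  rw [← Finset.sum_subset (Finset.range_subset_range.2 (Nat.succ_le_succ hp))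
    fun i _ hi => homogeneousComponent_eq_zero _ _ (by simp_all), sum_homogeneousComponent]

theorem homogeneousComponent_mul_of_totalDegree_le {p q : MvPolynomial σ R} {a b : ℕ}
    (hp : p.totalDegree ≤ a) (hq : q.totalDegree ≤ b) :
    homogeneousComponent (a + b) (p * q) = homogeneousComponent a p * homogeneousComponent b q := by
  conv_lhs => rw [← sum_range_homogeneousComponent_of_totalDegree_le hp,
    ← sum_range_homogeneousComponent_of_totalDegree_le hq, Finset.sum_mul_sum]
  simp only [map_sum]
  rw [Finset.sum_eq_single_of_mem a (by simp), Finset.sum_eq_single_of_mem b (by simp)]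
  · exact homogeneousComponent_of_mem ((homogeneousComponent_isHomogeneous a p).mul
      (homogeneousComponent_isHomogeneous b q)) |>.trans (if_pos rfl)
  · intro j hj hjb
    rw [homogeneousComponent_of_mem ((homogeneousComponent_isHomogeneous a p).mul
      (homogeneousComponent_isHomogeneous j q)), if_neg (by simp at hj; omega)]
  · intro i hi hia
    refine Finset.sum_eq_zero fun j hj => ?_
    rw [homogeneousComponent_of_mem ((homogeneousComponent_isHomogeneous i p).mul
      (homogeneousComponent_isHomogeneous j q)), if_neg (by simp at hi hj; omega)]

theorem homogeneousComponent_totalDegree_ne_zero {p : MvPolynomial σ R} (hp : p ≠ 0) :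
    homogeneousComponent p.totalDegree p ≠ 0 := by
  obtain ⟨μ, hμ, hdeg⟩ := Finset.exists_mem_eq_sup p.support (support_nonempty.2 hp)
    fun s => s.sum fun _ e => e
  intro h
  have := congrArg (coeff μ) h
  rw [coeff_homogeneousComponent, if_pos (by rw [totalDegree, hdeg]; rfl),
    coeff_zero] at this
  exact mem_support_iff.1 hμ this

variable {K : Type*} [Field K] [LinearOrder K] [IsStrictOrderedRing K] {ι : Type*}

theorem eq_zero_of_sum_sq_eq_zero {s : Finset ι} {x : ι → MvPolynomial σ K}
    (h : ∑ t ∈ s, x t ^ 2 = 0) : ∀ t ∈ s, x t = 0 := by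
  intro t ht
  refine MvPolynomial.funext fun e => ?_
  have he : ∑ t ∈ s, eval e (x t) ^ 2 = 0 := by simpa using congrArg (eval e) h
  simpa using (Finset.sum_eq_zero_iff_of_nonneg fun t _ => sq_nonneg _).1 he t ht

theorem totalDegree_le_of_sum_sq {s : Finset ι} {x : ι → MvPolynomial σ K} {d : ℕ}
    (h : (∑ t ∈ s, x t ^ 2).totalDegree ≤ 2 * d) : ∀ t ∈ s, (x t).totalDegree ≤ d := by
  by_contra! ⟨t, ht, hdt⟩
  obtain ⟨t₀, ht₀, hmax⟩ := s.exists_max_image (fun t => (x t).totalDegree) ⟨t, ht⟩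
  set m := (x t₀).totalDegree
  have hdm : d < m := hdt.trans_le (hmax t ht)
  have htop : ∑ t ∈ s, homogeneousComponent m (x t) ^ 2 = 0 := by
    rw [← homogeneousComponent_eq_zero (m + m) (∑ t ∈ s, x t ^ 2) (by omega), map_sum]
    exact Finset.sum_congr rfl fun t ht => by
      rw [sq, sq, homogeneousComponent_mul_of_totalDegree_le (hmax t ht) (hmax t ht)]
  refine homogeneousComponent_totalDegree_ne_zero (p := x t₀) ?_
    (eq_zero_of_sum_sq_eq_zero htop t₀ ht₀)
  rintro h0
  simp [m, h0] at hdm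

end MvPolynomial

namespace Representation

section Basic

variable {K G V : Type*} [CommSemiring K] [Group G] [AddCommMonoid V] [Module K V]
  (σ : Representation K G V)

def IsStable (U : Submodule K V) : Prop :=
  ∀ g, ∀ v ∈ U, σ g v ∈ U

theorem self_mem_span_orbit (v : V) : v ∈ Submodule.span K {w | ∃ g, w = σ g v} :=
  Submodule.subset_span ⟨1, by simp⟩

theorem span_orbit_eq_bot_iff {v : V} : Submodule.span K {w | ∃ g, w = σ g v} = ⊥ ↔ v = 0 := by
  refine ⟨fun h => (Submodule.mem_bot K).1 (h ▸ σ.self_mem_span_orbit v), fun h => ?_⟩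
  rw [Submodule.span_eq_bot]
  rintro _ ⟨g, rfl⟩
  rw [h, map_zero]

variable [Fintype G]

theorem norm_apply (v : V) : σ.norm v = ∑ g, σ g v :=
  LinearMap.sum_apply _ _ _

theorem norm_apply_of_forall_eq {v : V} (hv : ∀ g, σ g v = v) :
    σ.norm v = (Fintype.card G : K) • v := by
  simp [norm_apply, hv, Nat.cast_smul_eq_nsmul]

theorem norm_mul_apply_self {A : Type*} [CommSemiring A] [Algebra K A] {ρ : Representation K G A}
    (hρ : ∀ g (a b : A), ρ g (a * b) = ρ g a * ρ g b) (g : G) (a b : A) :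
    ρ.norm (ρ g a * ρ g b) = ρ.norm (a * b) := by
  rw [← hρ, norm_self_apply]

end Basic

section InnerProduct

variable {K G V : Type*} [Field K] [LinearOrder K] [Group G] [AddCommGroup V] [Module K V]

structure IsInvariantInnerProduct (σ : Representation K G V) (B : LinearMap.BilinForm K V) :
    Prop where
  isSymm : B.IsSymm
  pos : ∀ v, v ≠ 0 → 0 < B v v
  invariant : ∀ g v w, B (σ g v) (σ g w) = B v w

theorem exists_isInvariantInnerProduct [IsStrictOrderedRing K] [Fintype G]
    (σ : Representation K G V) : ∃ B : LinearMap.BilinForm K V, σ.IsInvariantInnerProduct B := by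
  obtain ⟨B₀, hsymm, hpos⟩ := LinearMap.BilinForm.exists_isSymm_pos (K := K) (V := V)
  have hB₀ : ∀ v, 0 ≤ B₀ v v := fun v => by
    rcases eq_or_ne v 0 with rfl | hv
    · simp
    · exact (hpos v hv).le
  refine ⟨∑ g, B₀.compl₁₂ (σ g) (σ g), ⟨⟨fun v w => ?_⟩, fun v hv => ?_, fun h v w => ?_⟩⟩
  · simp [hsymm.eq (σ _ v)]
  · simp only [LinearMap.sum_apply, LinearMap.compl₁₂_apply]
    exact Finset.sum_pos' (fun g _ => hB₀ _) ⟨1, Finset.mem_univ _, by simpa using hpos v hv⟩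
  · simp only [LinearMap.sum_apply, LinearMap.compl₁₂_apply, ← Module.End.mul_apply, ← map_mul]
    exact Fintype.sum_bijective (· * h) (Group.mulRight_bijective h) _ _ fun _ => rfl

variable {σ : Representation K G V} {B : LinearMap.BilinForm K V}

namespace IsInvariantInnerProduct

theorem eq_zero_of_apply_self_eq_zero (hB : σ.IsInvariantInnerProduct B) {v : V}
    (hv : B v v = 0) : v = 0 := by
  by_contra h
  exact (hB.pos v h).ne' hv

theorem isPosSemidef (hB : σ.IsInvariantInnerProduct B) : B.IsPosSemidef := by
  refine ⟨hB.isSymm, ⟨fun v => ?_⟩⟩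
  rcases eq_or_ne v 0 with rfl | hv
  · simp
  · exact (hB.pos v hv).le

theorem exists_intertwining (hB : σ.IsInvariantInnerProduct B) {U U' : Submodule K V}
    [FiniteDimensional K U'] (hU' : σ.IsStable U') {C : LinearMap.BilinForm K V}
    (hC : ∀ g, ∀ a ∈ U, ∀ b ∈ U', C (σ g a) (σ g b) = C a b) :
    ∃ φ : V →ₗ[K] V, (∀ v, φ v ∈ U') ∧ (∀ g, ∀ v ∈ U, φ (σ g v) = σ g (φ v)) ∧
      ∀ v, ∀ b ∈ U', B (φ v) b = C v b := by
  have hnd : (B.restrict U').Nondegenerate :=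
    ⟨fun x hx => Subtype.ext (hB.eq_zero_of_apply_self_eq_zero (hx x)),
      fun x hx => Subtype.ext (hB.eq_zero_of_apply_self_eq_zero (hx x))⟩
  let T : V →ₗ[K] U' := ((B.restrict U').toDual hnd).symm.toLinearMap ∘ₗ C.compl₂ U'.subtype
  have hT : ∀ v, ∀ b ∈ U', B (T v) b = C v b := fun v b hb =>
    LinearMap.BilinForm.apply_toDual_symm_apply (hB := hnd) _ ⟨b, hb⟩
  refine ⟨U'.subtype ∘ₗ T, fun v => (T v).2, fun g v hv => ?_, hT⟩
  -- both sides pair with `b ∈ U'` to `C v (σ g⁻¹ b)`, and `B` separates the points of `U'`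
  have hpair : ∀ b ∈ U', B (T (σ g v) - σ g (T v)) b = 0 := fun b hb => by
    have hb' : σ g (σ g⁻¹ b) = b := by rw [← Module.End.mul_apply, ← map_mul, mul_inv_cancel,
      map_one, Module.End.one_apply]
    rw [map_sub, LinearMap.sub_apply, hT _ b hb, ← hb', hB.invariant, hC g v hv _ (hU' _ b hb),
      hT _ _ (hU' _ b hb), sub_self]
  exact sub_eq_zero.1 (hB.eq_zero_of_apply_self_eq_zero
    (hpair _ (sub_mem (T _).2 (hU' g _ (T v).2))))

theorem bilin_eq_zero_of_not_iso (hB : σ.IsInvariantInnerProduct B) {W : Type*}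
    [AddCommGroup W] [Module K W]
    {U U' : Submodule K V} [FiniteDimensional K U'] (hU : σ.IsStable U) (hU' : σ.IsStable U')
    (hUirr : ∀ U₀ ≤ U, σ.IsStable U₀ → U₀ = ⊥ ∨ U₀ = U)
    (hU'irr : ∀ U₀ ≤ U', σ.IsStable U₀ → U₀ = ⊥ ∨ U₀ = U')
    (hniso : ¬ ∃ φ : V →ₗ[K] V, (∀ g, ∀ v ∈ U, φ (σ g v) = σ g (φ v)) ∧ Set.BijOn φ U U')
    {C : V →ₗ[K] V →ₗ[K] W} (hC : ∀ g, ∀ a ∈ U, ∀ b ∈ U', C (σ g a) (σ g b) = C a b) :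
    ∀ a ∈ U, ∀ b ∈ U', C a b = 0 := by
  intro a ha b hb
  rw [← Module.forall_dual_apply_eq_zero_iff K]
  intro ℓ
  by_contra hab
  obtain ⟨φ, hφU', hφ, hφC⟩ := hB.exists_intertwining (C := C.compr₂ ℓ) hU'
    fun g a ha b hb => by simp only [LinearMap.compr₂_apply, hC g a ha b hb]
  have hφa : φ a ≠ 0 := fun h => hab (by simpa [h] using (hφC a b hb).symm)
  have hker : U ⊓ LinearMap.ker φ = ⊥ := by
    refine (hUirr _ inf_le_left fun g v hv => ⟨hU g v hv.1, ?_⟩).resolve_right fun h => ?_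
    · simp only [SetLike.mem_coe, LinearMap.mem_ker] at hv ⊢
      rw [hφ g v hv.1, hv.2, map_zero]
    · rw [← h] at ha
      exact hφa ha.2
  have himage : U.map φ = U' := by
    refine (hU'irr _ (Submodule.map_le_iff_le_comap.2 fun v _ => hφU' v)
      ?_).resolve_left fun h => hφa ?_
    · rintro g _ ⟨v, hv, rfl⟩
      exact ⟨σ g v, hU g v hv, hφ g v hv⟩
    · simpa [h] using Submodule.mem_map_of_mem (f := φ) ha
  refine hniso ⟨φ, hφ, fun v _ => hφU' v, fun x hx y hy hxy => ?_, ?_⟩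
  · have : x - y ∈ U ⊓ LinearMap.ker φ := ⟨sub_mem hx hy, by simp [hxy]⟩
    simpa [hker, sub_eq_zero] using this
  · rw [← himage, Submodule.map_coe]
    exact Set.surjOn_image φ U

theorem bilin_eq_smul (hB : σ.IsInvariantInnerProduct B) {W : Type*} [AddCommGroup W] [Module K W]
    {U : Submodule K V} [FiniteDimensional K U]
    (habs : ∀ φ : V →ₗ[K] V, (∀ v ∈ U, φ v ∈ U) → (∀ g, ∀ v ∈ U, φ (σ g v) = σ g (φ v)) →
      ∃ c : K, ∀ v ∈ U, φ v = c • v)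
    (hU : σ.IsStable U) {C : V →ₗ[K] V →ₗ[K] W}
    (hC : ∀ g, ∀ a ∈ U, ∀ b ∈ U, C (σ g a) (σ g b) = C a b) {f : V} (hf : f ∈ U) (hf0 : f ≠ 0) :
    ∀ a ∈ U, ∀ b ∈ U, C a b = ((B f f)⁻¹ * B a b) • C f f := by
  intro a ha b hb
  rw [← sub_eq_zero, ← Module.forall_dual_apply_eq_zero_iff K]
  intro ℓ
  obtain ⟨φ, hφU, hφ, hφC⟩ := hB.exists_intertwining (C := C.compr₂ ℓ) hU
    fun g a ha b hb => by simp only [LinearMap.compr₂_apply, hC g a ha b hb]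
  obtain ⟨c, hc⟩ := habs φ (fun v _ => hφU v) hφ
  have hℓ : ∀ x ∈ U, ∀ y ∈ U, ℓ (C x y) = c * B x y := fun x hx y hy => by
    rw [← LinearMap.compr₂_apply, ← hφC x y hy, hc x hx, LinearMap.map_smul₂, smul_eq_mul]
  rw [map_sub, map_smul, hℓ a ha b hb, hℓ f hf f hf, smul_eq_mul]
  field_simp [(hB.pos f hf0).ne']
  ring

end IsInvariantInnerProduct

end InnerProduct

section Algebra

variable {K G A : Type*} [Field K] [LinearOrder K] [Group G] [Fintype G] [CommRing A]
  [Algebra K A] {ρ : Representation K G A} {B : LinearMap.BilinForm K A}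

namespace IsInvariantInnerProduct

theorem norm_mul_eq_zero_of_not_iso (hB : ρ.IsInvariantInnerProduct B)
    (hρ : ∀ g (a b : A), ρ g (a * b) = ρ g a * ρ g b)
    {U U' : Submodule K A} [FiniteDimensional K U'] (hU : ρ.IsStable U) (hU' : ρ.IsStable U')
    (hUirr : ∀ U₀ ≤ U, ρ.IsStable U₀ → U₀ = ⊥ ∨ U₀ = U)
    (hU'irr : ∀ U₀ ≤ U', ρ.IsStable U₀ → U₀ = ⊥ ∨ U₀ = U')
    (hniso : ¬ ∃ φ : A →ₗ[K] A, (∀ g, ∀ v ∈ U, φ (ρ g v) = ρ g (φ v)) ∧ Set.BijOn φ U U') :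
    ∀ a ∈ U, ∀ b ∈ U', ρ.norm (a * b) = 0 :=
  hB.bilin_eq_zero_of_not_iso (C := (LinearMap.mul K A).compr₂ ρ.norm) hU hU' hUirr hU'irr hniso
    fun g a _ b _ => norm_mul_apply_self hρ g a b

theorem norm_mul_eq_smul (hB : ρ.IsInvariantInnerProduct B)
    (hρ : ∀ g (a b : A), ρ g (a * b) = ρ g a * ρ g b)
    {U : Submodule K A} [FiniteDimensional K U]
    (habs : ∀ φ : A →ₗ[K] A, (∀ v ∈ U, φ v ∈ U) → (∀ g, ∀ v ∈ U, φ (ρ g v) = ρ g (φ v)) →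
      ∃ c : K, ∀ v ∈ U, φ v = c • v)
    (hU : ρ.IsStable U) {φ ψ : A →ₗ[K] A} (hφ : ∀ g, ∀ v ∈ U, φ (ρ g v) = ρ g (φ v))
    (hψ : ∀ g, ∀ v ∈ U, ψ (ρ g v) = ρ g (ψ v)) {f : A} (hf : f ∈ U) (hf0 : f ≠ 0) :
    ∀ a ∈ U, ∀ b ∈ U, ρ.norm (φ a * ψ b) = ((B f f)⁻¹ * B a b) • ρ.norm (φ f * ψ f) :=
  hB.bilin_eq_smul (C := ((LinearMap.mul K A).compl₁₂ φ ψ).compr₂ ρ.norm) habs hU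
    (fun g a ha b hb => by
      simp only [LinearMap.compr₂_apply, LinearMap.compl₁₂_apply, LinearMap.mul_apply',
        hφ g a ha, hψ g b hb, norm_mul_apply_self hρ]) hf hf0

theorem norm_sq_sum_eq (hB : ρ.IsInvariantInnerProduct B)
    (hρ : ∀ g (a b : A), ρ g (a * b) = ρ g a * ρ g b)
    {I : Type*} [Fintype I] {κ : I → Type*} [∀ i, Fintype (κ i)]
    {U : I → Submodule K A} {W : (i : I) → κ i → Submodule K A}
    [∀ i, FiniteDimensional K (U i)] [∀ i j, FiniteDimensional K (W i j)]
    (hU : ∀ i, ρ.IsStable (U i))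
    (hUabs : ∀ i, ∀ φ : A →ₗ[K] A, (∀ v ∈ U i, φ v ∈ U i) →
      (∀ g, ∀ v ∈ U i, φ (ρ g v) = ρ g (φ v)) → ∃ c : K, ∀ v ∈ U i, φ v = c • v)
    (hW : ∀ i j, ρ.IsStable (W i j))
    (hWirr : ∀ i j, ∀ U₀ ≤ W i j, ρ.IsStable U₀ → U₀ = ⊥ ∨ U₀ = W i j)
    (hniso : ∀ i i', i ≠ i' → ∀ j j', ¬ ∃ φ : A →ₗ[K] A,
      (∀ g, ∀ v ∈ W i j, φ (ρ g v) = ρ g (φ v)) ∧ Set.BijOn φ (W i j) (W i' j'))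
    {φ : (i : I) → κ i → A →ₗ[K] A} (hφ : ∀ i j g, ∀ v ∈ U i, φ i j (ρ g v) = ρ g (φ i j v))
    (hφW : ∀ i j, ∀ v ∈ U i, φ i j v ∈ W i j)
    {f : I → A} (hf : ∀ i, f i ∈ U i) (hf0 : ∀ i, f i ≠ 0)
    {e : (i : I) → κ i → A} (he : ∀ i j, e i j = φ i j (f i))
    {v : (i : I) → κ i → A} (hv : ∀ i j, v i j ∈ U i) :
    ρ.norm ((∑ i, ∑ j, φ i j (v i j)) ^ 2) = ρ.norm (∑ i, ∑ j, ∑ j',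
      ((B (f i) (f i))⁻¹ * B (v i j) (v i j')) • (e i j * e i j')) := by
  simp only [he]
  rw [map_sq_sum_of_map_mul_eq_zero ρ.norm]
  · simp only [map_sum, map_smul]
    refine Finset.sum_congr rfl fun i _ => ?_
    simp only [sq, Finset.sum_mul_sum, map_sum]
    exact Finset.sum_congr rfl fun j _ => Finset.sum_congr rfl fun j' _ =>
      hB.norm_mul_eq_smul hρ (hUabs i) (hU i) (hφ i j) (hφ i j') (hf i) (hf0 i)
        _ (hv i j) _ (hv i j')
  · intro i _ i' _ hii'
    simp only [Finset.sum_mul_sum, map_sum]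
    exact Finset.sum_eq_zero fun j _ => Finset.sum_eq_zero fun j' _ =>
      hB.norm_mul_eq_zero_of_not_iso hρ (hW i j) (hW i' j') (hWirr i j) (hWirr i' j')
        (hniso i i' hii' j j') _ (hφW i j _ (hv i j)) _ (hφW i' j' _ (hv i' j'))

end IsInvariantInnerProduct

end Algebra

end Representation

section PolyAct

variable {K : Type*} [CommSemiring K] {n : ℕ}

theorem polyAct_one : polyAct (1 : Matrix (Fin n) (Fin n) K) = AlgHom.id K _ :=
  algHom_ext fun i => by simp [polyAct, Matrix.one_apply]

theorem polyAct_mul (M N : Matrix (Fin n) (Fin n) K) :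
    polyAct (M * N) = (polyAct N).comp (polyAct M) :=
  algHom_ext fun i => by
    simp only [polyAct, AlgHom.comp_apply, aeval_X, map_sum, map_smul, Matrix.mul_apply,
      Finset.smul_sum, smul_smul, Finset.sum_smul]
    exact Finset.sum_comm

variable {G : Type*} [Group G]

noncomputable def polyRep (ρ : G →* (Matrix (Fin n) (Fin n) K)ˣ) :
    Representation K G (MvPolynomial (Fin n) K) where
  toFun g := (polyAct (ρ g⁻¹ : Matrix (Fin n) (Fin n) K)).toLinearMap
  map_one' := by
    simp only [inv_one, map_one, Units.val_one, polyAct_one, AlgHom.toLinearMap_id]; rfl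
  map_mul' g h := by
    simp only [mul_inv_rev, map_mul, Units.val_mul, polyAct_mul, AlgHom.comp_toLinearMap]; rfl

theorem polyRep_apply_mul (ρ : G →* (Matrix (Fin n) (Fin n) K)ˣ) (g : G)
    (a b : MvPolynomial (Fin n) K) : polyRep ρ g (a * b) = polyRep ρ g a * polyRep ρ g b :=
  map_mul (polyAct (ρ g⁻¹ : Matrix (Fin n) (Fin n) K)) a b

end PolyAct

theorem invariant_sos_decomposition_general {n d : ℕ} {G : Type*} [Group G] [Fintype G]
    (ρ : G →* (Matrix (Fin n) (Fin n) ℝ)ˣ)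
    {I : Type*} [Fintype I] (η : I → ℕ) [∀ i, NeZero (η i)]
    (W : (i : I) → Fin (η i) → Submodule ℝ (MvPolynomial (Fin n) ℝ))
    -- the `W i j` decompose the space of polynomials of degree at most `d`
    (hWle : ∀ i j, W i j ≤ restrictTotalDegree (Fin n) ℝ d)
    (hWsup : (⨆ p : Σ i : I, Fin (η i), W p.1 p.2) = restrictTotalDegree (Fin n) ℝ d)
    -- each `W i j` is a `G`-stable irreducible submodule
    (hWstab : ∀ i j (g : G), ∀ q ∈ W i j, polyAct (↑(ρ g⁻¹)) q ∈ W i j)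
    (hWirr : ∀ i j, W i j ≠ ⊥ ∧ ∀ U : Submodule ℝ (MvPolynomial (Fin n) ℝ),
      U ≤ W i j → (∀ g : G, ∀ q ∈ U, polyAct (↑(ρ g⁻¹)) q ∈ U) → U = ⊥ ∨ U = W i j)
    -- each `W i j` remains irreducible over `ℂ`: `G`-endomorphisms are scalar
    (hWabs : ∀ i j, ∀ φ : MvPolynomial (Fin n) ℝ →ₗ[ℝ] MvPolynomial (Fin n) ℝ,
      (∀ q ∈ W i j, φ q ∈ W i j) →
      (∀ g : G, ∀ q ∈ W i j, φ (polyAct (↑(ρ g⁻¹)) q) = polyAct (↑(ρ g⁻¹)) (φ q)) →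
      ∃ c : ℝ, ∀ q ∈ W i j, φ q = c • q)
    -- for `i ≠ i'` the modules `W i j` and `W i' j'` are not `G`-isomorphic
    (hniso : ∀ i i', i ≠ i' → ∀ j j',
      ¬ ∃ φ : MvPolynomial (Fin n) ℝ →ₗ[ℝ] MvPolynomial (Fin n) ℝ,
        (∀ g : G, ∀ q ∈ W i j, φ (polyAct (↑(ρ g⁻¹)) q) = polyAct (↑(ρ g⁻¹)) (φ q)) ∧
        Set.BijOn φ (W i j) (W i' j'))
    -- the polynomials `f i j`: `f i 0` cyclically generates `W i 0`, and `f i j` is its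
    -- image under the `G`-isomorphism `φ i j : W i 0 → W i j`
    (f : (i : I) → Fin (η i) → MvPolynomial (Fin n) ℝ)
    (hfgen : ∀ i, Submodule.span ℝ {q | ∃ g : G, q = polyAct (↑(ρ g⁻¹)) (f i 0)} = W i 0)
    (φ : (i : I) → (j : Fin (η i)) →
      MvPolynomial (Fin n) ℝ →ₗ[ℝ] MvPolynomial (Fin n) ℝ)
    (hφ : ∀ i j, (∀ g : G, ∀ q ∈ W i 0,
        (φ i j) (polyAct (↑(ρ g⁻¹)) q) = polyAct (↑(ρ g⁻¹)) ((φ i j) q)) ∧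
      Set.BijOn (φ i j) (W i 0) (W i j) ∧ f i j = φ i j (f i 0)) :
    ∀ p : MvPolynomial (Fin n) ℝ,
      (∀ g : G, polyAct (↑(ρ g⁻¹)) p = p) →
      p.totalDegree ≤ 2 * d →
      (∃ (l : ℕ) (s : Fin l → MvPolynomial (Fin n) ℝ), p = ∑ t, (s t) ^ 2) →
      ∃ q : (i : I) → Fin (η i) → MvPolynomial (Fin n) ℝ,
        (∀ i j, ∃ (l : ℕ) (s : Fin l → MvPolynomial (Fin n) ℝ),
          (∀ t, s t ∈ Submodule.span ℝ (Set.range (f i))) ∧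
          q i j = ∑ t, (s t) ^ 2) ∧
        p = ∑ i, ∑ j, ∑ g : G, polyAct (↑(ρ g⁻¹)) (q i j) := by
  intro p hp_inv hp_deg ⟨l, s, hp⟩
  obtain ⟨B, hB⟩ := (polyRep ρ).exists_isInvariantInnerProduct
  have := fun i j => Submodule.finiteDimensional_of_le (hWle i j)
  have hf (i) : f i 0 ∈ W i 0 := hfgen i ▸ (polyRep ρ).self_mem_span_orbit (f i 0)
  have hf0 (i) : f i 0 ≠ 0 := fun h =>
    (hWirr i 0).1 (hfgen i ▸ (polyRep ρ).span_orbit_eq_bot_iff.2 h)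
  have hs (t) : ∃ v : (i : I) → Fin (η i) → MvPolynomial (Fin n) ℝ,
      (∀ i j, v i j ∈ W i 0) ∧ s t = ∑ i, ∑ j, φ i j (v i j) := by
    obtain ⟨u, huW, hu⟩ := Submodule.exists_sum_eq_of_mem_iSup <| hWsup ▸
      (mem_restrictTotalDegree _ _ _).2 (totalDegree_le_of_sum_sq (hp ▸ hp_deg) t
        (Finset.mem_univ t))
    choose v hvW hv using fun i j => (hφ i j).2.1.surjOn (huW ⟨i, j⟩)
    exact ⟨v, hvW, by simp only [← hu, Fintype.sum_sigma, hv]⟩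
  choose v hvW hsv using hs
  have hsq (t) := hsv t ▸ hB.norm_sq_sum_eq (polyRep_apply_mul ρ) (U := fun i => W i 0)
    (fun i => hWstab i 0) (fun i => hWabs i 0) hWstab (fun i j => (hWirr i j).2) hniso
    (fun i j => (hφ i j).1) (fun i j => (hφ i j).2.1.mapsTo) hf hf0 (fun i j => (hφ i j).2.2)
    (hvW t)
  set c : ℝ := (Fintype.card G : ℝ)
  obtain ⟨L, hL⟩ := hB.isPosSemidef.exists_sum_sq_eq_sum_gram
    (c := fun i => (c * B (f i 0) (f i 0))⁻¹)
    (fun i => inv_nonneg.2 (mul_nonneg (Nat.cast_nonneg _) (hB.pos _ (hf0 i)).le)) v f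
  refine ⟨fun i k => (∑ j, L i k j • f i j) ^ 2, fun i k => ⟨1, fun _ => ∑ j, L i k j • f i j,
    fun _ => Submodule.sum_mem _ fun j _ => Submodule.smul_mem _ _ (Submodule.subset_span ⟨j, rfl⟩),
    by simp⟩, ?_⟩
  calc p = c⁻¹ • (polyRep ρ).norm p := by
        rw [(polyRep ρ).norm_apply_of_forall_eq hp_inv, inv_smul_smul₀ (by positivity)]
    _ = (polyRep ρ).norm (∑ i, ∑ k, (∑ j, L i k j • f i j) ^ 2) := by
        rw [← hL, hp, map_sum, Finset.smul_sum]
        simp only [hsq, map_sum, map_smul, Finset.smul_sum, smul_smul, mul_inv, mul_assoc]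
    _ = _ := by simp only [map_sum, Representation.norm_apply]; rfl

/-- **Symmetry-adapted sum-of-squares decomposition of invariant polynomials.**
Let the finite group `G` act linearly on `ℝ^n` (via `ρ`), hence on `ℝ[X_1,…,X_n]` by
`f^g := polyAct (ρ g⁻¹) f`.  Let `ℝ[X]_{≤d} = ⊕_{i ∈ I} ⊕_{j} W i j` be a decomposition
into irreducible `G`-submodules, the `W i j` (for fixed `i`) pairwise `G`-isomorphic
(via maps `φ i j`), absolutely irreducible (every `G`-endomorphism is scalar, i.e.
they stay irreducible over `ℂ`), and non-isomorphic for distinct `i`; let `f i 0`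
cyclically generate `W i 0` and `f i j = φ i j (f i 0)`.  Then every `G`-invariant sum
of squares `p` of degree at most `2d` can be written as
`p = Σ_i Σ_j Σ_g (q i j)^g` with each `q i j` a sum of squares of elements of the
linear span of `f i 0, …, f i (η_i - 1)`. -/
theorem invariant_sos_decomposition {n d : ℕ} {G : Type*} [Group G] [Fintype G]
    (ρ : G →* (Matrix (Fin n) (Fin n) ℝ)ˣ)
    {I : Type*} [Fintype I] (η : I → ℕ) [∀ i, NeZero (η i)]
    (W : (i : I) → Fin (η i) → Submodule ℝ (MvPolynomial (Fin n) ℝ))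
    -- the `W i j` decompose the space of polynomials of degree at most `d`
    (hWle : ∀ i j, W i j ≤ restrictTotalDegree (Fin n) ℝ d)
    (hWindep : iSupIndep (fun p : Σ i : I, Fin (η i) => W p.1 p.2))
    (hWsup : (⨆ p : Σ i : I, Fin (η i), W p.1 p.2) = restrictTotalDegree (Fin n) ℝ d)
    -- each `W i j` is a `G`-stable irreducible submodule
    (hWstab : ∀ i j (g : G), ∀ q ∈ W i j, polyAct (↑(ρ g⁻¹)) q ∈ W i j)
    (hWirr : ∀ i j, W i j ≠ ⊥ ∧ ∀ U : Submodule ℝ (MvPolynomial (Fin n) ℝ),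
      U ≤ W i j → (∀ g : G, ∀ q ∈ U, polyAct (↑(ρ g⁻¹)) q ∈ U) → U = ⊥ ∨ U = W i j)
    -- each `W i j` remains irreducible over `ℂ`: `G`-endomorphisms are scalar
    (hWabs : ∀ i j, ∀ φ : MvPolynomial (Fin n) ℝ →ₗ[ℝ] MvPolynomial (Fin n) ℝ,
      (∀ q ∈ W i j, φ q ∈ W i j) →
      (∀ g : G, ∀ q ∈ W i j, φ (polyAct (↑(ρ g⁻¹)) q) = polyAct (↑(ρ g⁻¹)) (φ q)) →
      ∃ c : ℝ, ∀ q ∈ W i j, φ q = c • q)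
    -- for `i ≠ i'` the modules `W i j` and `W i' j'` are not `G`-isomorphic
    (hniso : ∀ i i', i ≠ i' → ∀ j j',
      ¬ ∃ φ : MvPolynomial (Fin n) ℝ →ₗ[ℝ] MvPolynomial (Fin n) ℝ,
        (∀ g : G, ∀ q ∈ W i j, φ (polyAct (↑(ρ g⁻¹)) q) = polyAct (↑(ρ g⁻¹)) (φ q)) ∧
        Set.BijOn φ (W i j) (W i' j'))
    -- the polynomials `f i j`: `f i 0` cyclically generates `W i 0`, and `f i j` is its
    -- image under the `G`-isomorphism `φ i j : W i 0 → W i j`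
    (f : (i : I) → Fin (η i) → MvPolynomial (Fin n) ℝ)
    (hfgen : ∀ i, Submodule.span ℝ {q | ∃ g : G, q = polyAct (↑(ρ g⁻¹)) (f i 0)} = W i 0)
    (φ : (i : I) → (j : Fin (η i)) →
      MvPolynomial (Fin n) ℝ →ₗ[ℝ] MvPolynomial (Fin n) ℝ)
    (hφ : ∀ i j, (∀ g : G, ∀ q ∈ W i 0,
        (φ i j) (polyAct (↑(ρ g⁻¹)) q) = polyAct (↑(ρ g⁻¹)) ((φ i j) q)) ∧
      Set.BijOn (φ i j) (W i 0) (W i j) ∧ f i j = φ i j (f i 0)) :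
    ∀ p : MvPolynomial (Fin n) ℝ,
      (∀ g : G, polyAct (↑(ρ g⁻¹)) p = p) →
      p.totalDegree ≤ 2 * d →
      (∃ (l : ℕ) (s : Fin l → MvPolynomial (Fin n) ℝ), p = ∑ t, (s t) ^ 2) →
      ∃ q : (i : I) → Fin (η i) → MvPolynomial (Fin n) ℝ,
        (∀ i j, ∃ (l : ℕ) (s : Fin l → MvPolynomial (Fin n) ℝ),
          (∀ t, s t ∈ Submodule.span ℝ (Set.range (f i))) ∧
          q i j = ∑ t, (s t) ^ 2) ∧
        p = ∑ i, ∑ j, ∑ g : G, polyAct (↑(ρ g⁻¹)) (q i j) :=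
  invariant_sos_decomposition_general ρ η W hWle hWsup hWstab hWirr hWabs hniso f hfgen φ hφ
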